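/- Let F be a field of characteristic ≠ 2, V an F-vector space, b a symmetric bilinear form on V, × an anticommutative bilinear product on V, and α ∈ F with 2α − 1 ≠ 0. On the quadratic algebra Q = Q(V, b, ×) define the scalar mutation product x •_α y := α(xy) + (1−α)(yx). Then the algebra (Q, •_α) is isomorphic as an F-algebra to Q(V, (2α−1)^{−2}b, ×); explicitly, the linear map Q(V, (2α−1)^{−2}b, ×) → (Q, •_α) sending 1 ↦ 1 and v ↦ (2α−1)^{−1}v for v ∈ V is an algebra isomorphism. -/
import Mathlib


/-- The multiplication of the quadratic algebra `Q(V, b, ×)` on `F1 ⊕ V ≃ F × V`: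
`(α1+u)(β1+v) = (αβ − b(u,v))1 + (αv + βu + u×v)`. -/
def qAlgMul {F V : Type*} [Field F] [AddCommGroup V] [Module F V]
    (b : V →ₗ[F] V →ₗ[F] F) (c : V →ₗ[F] V →ₗ[F] V) (x y : F × V) : F × V :=
  (x.1 * y.1 - b x.2 y.2, x.1 • y.2 + y.1 • x.2 + c x.2 y.2)

/-- Let `F` be a field of characteristic `≠ 2`, `b` a symmetric bilinear form and
`×` an anticommutative product on `V`, and `α ∈ F` with `2α − 1 ≠ 0`.  Then the
scalar mutation `(Q(V,b,×), •_α)`, `x •_α y := α(xy) + (1−α)(yx)`, is isomorphic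
to `Q(V, (2α−1)⁻²b, ×)`; explicitly, the linear map fixing `1` and sending
`v ↦ (2α−1)⁻¹v` on `V` is an algebra isomorphism
`Q(V, (2α−1)⁻²b, ×) → (Q(V,b,×), •_α)`. -/
theorem stmt17 {F V : Type*} [Field F] [AddCommGroup V] [Module F V]
    (hchar : (2 : F) ≠ 0)
    (b : V →ₗ[F] V →ₗ[F] F) (hsym : ∀ u v : V, b u v = b v u)
    (c : V →ₗ[F] V →ₗ[F] V) (hanti : ∀ u v : V, c u v = - c v u)
    (α : F) (hα : 2 * α - 1 ≠ 0) :
    Function.Bijective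
      (⇑(LinearMap.prodMap (LinearMap.id : F →ₗ[F] F)
        ((2 * α - 1)⁻¹ • (LinearMap.id : V →ₗ[F] V)))) ∧
    LinearMap.prodMap (LinearMap.id : F →ₗ[F] F)
        ((2 * α - 1)⁻¹ • (LinearMap.id : V →ₗ[F] V)) ((1 : F), (0 : V)) =
      ((1 : F), (0 : V)) ∧
    (∀ x y : F × V,
      LinearMap.prodMap (LinearMap.id : F →ₗ[F] F)
          ((2 * α - 1)⁻¹ • (LinearMap.id : V →ₗ[F] V))
          (qAlgMul ((((2 * α - 1) ^ 2)⁻¹ : F) • b) c x y) =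
        α • qAlgMul b c
            (LinearMap.prodMap (LinearMap.id : F →ₗ[F] F)
              ((2 * α - 1)⁻¹ • (LinearMap.id : V →ₗ[F] V)) x)
            (LinearMap.prodMap (LinearMap.id : F →ₗ[F] F)
              ((2 * α - 1)⁻¹ • (LinearMap.id : V →ₗ[F] V)) y) +
          (1 - α) • qAlgMul b c
            (LinearMap.prodMap (LinearMap.id : F →ₗ[F] F)
              ((2 * α - 1)⁻¹ • (LinearMap.id : V →ₗ[F] V)) y)
            (LinearMap.prodMap (LinearMap.id : F →ₗ[F] F)
              ((2 * α - 1)⁻¹ • (LinearMap.id : V →ₗ[F] V)) x)) := by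
  refine ⟨?_, ?_, ?_⟩
  · constructor
    · intro x y h
      simp only [LinearMap.prodMap_apply, LinearMap.id_coe, id_eq, LinearMap.smul_apply,
        Prod.mk.injEq] at h
      obtain ⟨h1, h2⟩ := h
      have := congrArg (fun v => (2 * α - 1) • v) h2
      simp only [smul_smul, mul_inv_cancel₀ hα, one_smul] at this
      exact Prod.ext h1 this
    · intro ⟨a, v⟩
      refine ⟨(a, (2 * α - 1) • v), ?_⟩
      simp [smul_smul, inv_mul_cancel₀ hα, mul_inv_cancel₀ hα]
  · simp
  · intro x y
    obtain ⟨a, u⟩ := x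
    obtain ⟨d, v⟩ := y
    simp only [qAlgMul, LinearMap.prodMap_apply, LinearMap.id_coe, id_eq, LinearMap.smul_apply,
      LinearMap.map_smul, LinearMap.smul_apply, Prod.smul_mk, Prod.mk_add_mk, smul_eq_mul,
      smul_add, smul_smul]
    refine Prod.ext ?_ ?_
    · show _ = _
      rw [hsym v u]
      field_simp
      ring
    · show _ = _
      rw [hanti v u]
      have h2 : (2 * α - 1)⁻¹ * (2 * α - 1)⁻¹ * (α + (1-α)) = (2 * α - 1)⁻¹ * (2 * α - 1)⁻¹ := by ring
      have key : α * ((2*α-1)⁻¹ * (2*α-1)⁻¹) - (1-α) * ((2*α-1)⁻¹ * (2*α-1)⁻¹) = (2*α-1)⁻¹ := by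
        rw [show α * ((2*α-1)⁻¹ * (2*α-1)⁻¹) - (1-α) * ((2*α-1)⁻¹ * (2*α-1)⁻¹)
          = (2*α-1) * (2*α-1)⁻¹ * (2*α-1)⁻¹ from by ring, mul_inv_cancel₀ hα, one_mul]
      match_scalars <;> field_simp <;> ring
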